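/- arXiv:2301.02144 — 4 statements merged into one kernel-verified Lean document; each statement's English description precedes it below -/
import Mathlib

section
/- (Tang–Fan–Matsufuji bound, Lemma 1.) Let z_0,…,z_{K−1} be K complex sequences of length L whose entries all have modulus 1, forming a (K,Z,L)-ZCZ sequence set. Then K·(Z+1) ≤ L; equivalently, the performance parameter ρ = K(Z+1)/L satisfies ρ ≤ 1. -/
/-!
The `K (Z + 1)` cyclic shifts `n ↦ z_i ((n + u) mod L)`, `0 ≤ u ≤ Z`, are vectors of `ℂ^L`.
Their inner products are periodic correlations at lags `v - u ∈ [0, Z]`, so the ZCZ conditions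
say exactly that they are pairwise orthogonal, each of squared norm `L ≠ 0`.
Orthogonal nonzero vectors are linearly independent, hence there are at most `L` of them.
-/

open Finset ComplexConjugate

/-- Periodic cross-correlation function (PCCF) of two complex sequences of length `N`:
`φ(x,y)(u) = Σ_{n=0}^{N−1} x_n · conj(y_{(n+u) mod N})`. -/
noncomputable def pccf (N : ℕ) (x y : ℕ → ℂ) (u : ℕ) : ℂ :=
  ∑ n ∈ Finset.range N, x n * (starRingEnd ℂ) (y ((n + u) % N))

theorem Finset.sum_range_add_mod {M : Type*} [AddCommMonoid M] {L : ℕ} (hL : 0 < L)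
    (f : ℕ → M) (t : ℕ) : ∑ n ∈ range L, f ((n + t) % L) = ∑ n ∈ range L, f n := by
  have : NeZero L := ⟨hL.ne'⟩
  rw [← Fin.sum_univ_eq_sum_range (fun n => f ((n + t) % L)), ← Fin.sum_univ_eq_sum_range]
  exact Fintype.sum_equiv (Equiv.addRight (Fin.ofNat L t)) _ _ fun n => by
    simp [Fin.val_add]

noncomputable def cyclicShift (L : ℕ) (x : ℕ → ℂ) (u : ℕ) : EuclideanSpace ℂ (Fin L) :=
  WithLp.toLp 2 fun n => x ((n + u) % L)

theorem inner_cyclicShift (L : ℕ) (x y : ℕ → ℂ) (u v : ℕ) :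
    inner ℂ (cyclicShift L y v) (cyclicShift L x u) =
      ∑ n ∈ range L, x ((n + u) % L) * conj (y ((n + v) % L)) := by
  rw [PiLp.inner_apply, ← Fin.sum_univ_eq_sum_range (fun n => x ((n + u) % L) * _)]
  simp [cyclicShift]

theorem pccf_sub_eq_inner_cyclicShift {L : ℕ} (hL : 0 < L) (x y : ℕ → ℂ) {u v : ℕ}
    (huv : u ≤ v) :
    pccf L x y (v - u) = inner ℂ (cyclicShift L y v) (cyclicShift L x u) := by
  rw [inner_cyclicShift, pccf, ← sum_range_add_mod hL _ u]
  refine sum_congr rfl fun n _ => ?_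
  rw [Nat.mod_add_mod, show n + u + (v - u) = n + v by omega]

theorem pairwise_inner_cyclicShift_eq_zero {K Z L : ℕ} (hL : 0 < L) (z : ℕ → ℕ → ℂ)
    (hauto : ∀ i < K, ∀ u, 1 ≤ u → u ≤ Z → pccf L (z i) (z i) u = 0)
    (hcross : ∀ i < K, ∀ j < K, i ≠ j → ∀ u ≤ Z, pccf L (z i) (z j) u = 0) :
    Pairwise fun p q : Fin K × Fin (Z + 1) =>
      inner ℂ (cyclicShift L (z p.1) p.2) (cyclicShift L (z q.1) q.2) = 0 := by
  intro p q hpq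
  wlog hle : p.2 ≤ q.2 generalizing p q
  · exact inner_eq_zero_symm.mp (this hpq.symm (le_of_not_ge hle))
  rw [inner_eq_zero_symm, ← pccf_sub_eq_inner_cyclicShift hL _ _ hle]
  by_cases hi : p.1 = q.1
  · have h2 : p.2 ≠ q.2 := fun h => hpq (Prod.ext hi h)
    rw [hi]
    exact hauto _ q.1.isLt _ (by omega) (by omega)
  · exact hcross _ p.1.isLt _ q.1.isLt (Fin.val_injective.ne hi) _ (by omega)

theorem tang_fan_matsufuji_bound_general (K Z L : ℕ) (hL : 1 ≤ L) (z : ℕ → ℕ → ℂ)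
    (hauto0 : ∀ i < K, pccf L (z i) (z i) 0 = (L : ℂ))
    (hauto : ∀ i < K, ∀ u, 1 ≤ u → u ≤ Z → pccf L (z i) (z i) u = 0)
    (hcross : ∀ i < K, ∀ j < K, i ≠ j → ∀ u ≤ Z, pccf L (z i) (z j) u = 0) :
    K * (Z + 1) ≤ L := by
  let s : Fin K × Fin (Z + 1) → EuclideanSpace ℂ (Fin L) := fun p => cyclicShift L (z p.1) p.2
  have hs : ∀ p, s p ≠ 0 := by
    intro p hp
    have hnorm := pccf_sub_eq_inner_cyclicShift hL (z p.1) (z p.1) (le_refl p.2.val)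
    rw [Nat.sub_self, hauto0 _ p.1.isLt] at hnorm
    simp only [s] at hp
    rw [hp, inner_zero_left, Nat.cast_eq_zero] at hnorm
    omega
  have hindep := linearIndependent_of_ne_zero_of_inner_eq_zero hs
    (pairwise_inner_cyclicShift_eq_zero hL z hauto hcross)
  simpa using hindep.fintype_card_le_finrank

/-- **Tang–Fan–Matsufuji bound (Lemma 1).**
If `z_0, …, z_{K−1}` are `K` complex sequences of length `L ≥ 1` with unimodular entries
forming a `(K,Z,L)`-ZCZ sequence set, then `K·(Z+1) ≤ L`, i.e. the performance
parameter `ρ = K(Z+1)/L` satisfies `ρ ≤ 1`. -/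
theorem tang_fan_matsufuji_bound (K Z L : ℕ) (hL : 1 ≤ L) (z : ℕ → ℕ → ℂ)
    (hmod : ∀ i < K, ∀ n < L, ‖z i n‖ = 1)
    (hauto0 : ∀ i < K, pccf L (z i) (z i) 0 = (L : ℂ))
    (hauto : ∀ i < K, ∀ u, 1 ≤ u → u ≤ Z → pccf L (z i) (z i) u = 0)
    (hcross : ∀ i < K, ∀ j < K, i ≠ j → ∀ u ≤ Z, pccf L (z i) (z j) u = 0) :
    K * (Z + 1) ≤ L :=
  tang_fan_matsufuji_bound_general K Z L hL z hauto0 hauto hcross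
end

section
/- (Lemma 3.) Let k ≥ 0 and let h : {0,1}^{k+2} → ℤ_2 be the Boolean function in variables x_0,…,x_{k+1} given by h = Σ_{β=1}^{k+1} c_β x_β x_0 + Σ_{1 ≤ μ < ν ≤ k} d_{μν} x_μ x_ν + Σ_{α=0}^{k+1} e_α x_α + e′, where c_{k+1} = 1, c_β ∈ ℤ_2 for 1 ≤ β ≤ k, and d_{μν}, e_α, e′ ∈ ℤ_2. Let h_i = h(i_0,…,i_{k+1}) for 0 ≤ i ≤ 2^{k+2}−1, where (i_0,…,i_{k+1}) is the binary representation of i with i_0 the least significant bit. Then for every 0 ≤ τ ≤ 2^{k+1}−1 one has (−1)^{h_τ + h_{τ+1}} + (−1)^{h_{τ+2^{k+1}} + h_{τ+1+2^{k+1}}} = 0, where all subscripts are reduced modulo 2^{k+2}. -/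
/-!
Reduction modulo `2^(k+2)` does not change the bits `x_0, …, x_{k+1}`, and adding `2^(k+1)`
flips `x_{k+1}` alone, which changes `h` by `c_{k+1} x_0 + e_{k+1} = x_0 + e_{k+1}`.
So the four exponents sum to `x_0(τ) + x_0(τ+1) = 1` in `ℤ₂`: the two signs are opposite.
-/

/-- The `t`-th bit of the natural number `x`, viewed as an element of `ℤ₂`. -/
def bitb (x t : ℕ) : ZMod 2 := if x.testBit t then 1 else 0

def quadForm (k : ℕ) (c : ℕ → ZMod 2) (d : ℕ → ℕ → ZMod 2) (e : ℕ → ZMod 2) (e' : ZMod 2)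
    (x : ℕ → ZMod 2) : ZMod 2 :=
  (∑ β ∈ Finset.Icc 1 (k + 1), c β * x β * x 0)
    + (∑ μ ∈ Finset.Icc 1 k, ∑ ν ∈ Finset.Ioc μ k, d μ ν * x μ * x ν)
    + (∑ α ∈ Finset.range (k + 2), e α * x α) + e'

section quadForm

variable {k : ℕ} {c : ℕ → ZMod 2} {d : ℕ → ℕ → ZMod 2} {e : ℕ → ZMod 2} {e' : ZMod 2}

theorem quadForm_congr {x y : ℕ → ZMod 2} (hxy : ∀ t < k + 2, x t = y t) :
    quadForm k c d e e' x = quadForm k c d e e' y := by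
  have hIcc : ∀ β ∈ Finset.Icc 1 (k + 1), c β * x β * x 0 = c β * y β * y 0 := by
    intro β hβ
    rw [Finset.mem_Icc] at hβ
    rw [hxy β (by omega), hxy 0 (by omega)]
  have hIoc : ∀ μ ∈ Finset.Icc 1 k, ∀ ν ∈ Finset.Ioc μ k,
      d μ ν * x μ * x ν = d μ ν * y μ * y ν := by
    intro μ hμ ν hν
    rw [Finset.mem_Icc] at hμ
    rw [Finset.mem_Ioc] at hν
    rw [hxy μ (by omega), hxy ν (by omega)]
  have hrange : ∀ α ∈ Finset.range (k + 2), e α * x α = e α * y α := by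
    intro α hα
    rw [hxy α (Finset.mem_range.mp hα)]
  unfold quadForm
  rw [Finset.sum_congr rfl hIcc, Finset.sum_congr rfl fun μ hμ => Finset.sum_congr rfl (hIoc μ hμ),
    Finset.sum_congr rfl hrange]

/-- `x_{k+1}` occurs only in the monomials `c_{k+1} x_{k+1} x_0` and `e_{k+1} x_{k+1}`. -/
theorem quadForm_flip_top {x y : ℕ → ZMod 2} (hlow : ∀ t ≤ k, y t = x t)
    (htop : y (k + 1) = x (k + 1) + 1) :
    quadForm k c d e e' y = quadForm k c d e e' x + c (k + 1) * x 0 + e (k + 1) := by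
  have hIcc : ∀ β ∈ Finset.Icc 1 k, c β * y β * y 0 = c β * x β * x 0 := by
    intro β hβ
    rw [Finset.mem_Icc] at hβ
    rw [hlow β hβ.2, hlow 0 (Nat.zero_le k)]
  have hIoc : ∀ μ ∈ Finset.Icc 1 k, ∀ ν ∈ Finset.Ioc μ k,
      d μ ν * y μ * y ν = d μ ν * x μ * x ν := by
    intro μ hμ ν hν
    rw [Finset.mem_Icc] at hμ
    rw [Finset.mem_Ioc] at hν
    rw [hlow μ hμ.2, hlow ν hν.2]
  have hrange : ∀ α ∈ Finset.range (k + 1), e α * y α = e α * x α := by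
    intro α hα
    rw [hlow α (Nat.lt_succ_iff.mp (Finset.mem_range.mp hα))]
  unfold quadForm
  rw [Finset.sum_Icc_succ_top (Nat.le_add_left 1 k), Finset.sum_Icc_succ_top (Nat.le_add_left 1 k),
    Finset.sum_range_succ, Finset.sum_range_succ (n := k + 1), Finset.sum_congr rfl hIcc,
    Finset.sum_congr rfl fun μ hμ => Finset.sum_congr rfl (hIoc μ hμ), Finset.sum_congr rfl hrange,
    htop, hlow 0 (Nat.zero_le k)]
  ring

end quadForm

theorem bitb_mod_two_pow {i n t : ℕ} (ht : t < n) : bitb (i % 2 ^ n) t = bitb i t := by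
  simp [bitb, Nat.testBit_mod_two_pow, ht]

theorem bitb_add_two_pow_of_lt {i n t : ℕ} (ht : t < n) : bitb (i + 2 ^ n) t = bitb i t := by
  rw [bitb, bitb, Nat.add_comm, Nat.testBit_two_pow_add_gt ht]

theorem bitb_add_two_pow_self (i n : ℕ) : bitb (i + 2 ^ n) n = bitb i n + 1 := by
  rw [bitb, bitb, Nat.add_comm, Nat.testBit_two_pow_add_eq]
  cases i.testBit n <;> decide

theorem bitb_succ_zero (i : ℕ) : bitb (i + 1) 0 = bitb i 0 + 1 := by
  simpa using bitb_add_two_pow_self i 0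

theorem neg_one_pow_val_add_neg_one_pow_val_eq_zero (a b a' b' : ZMod 2)
    (h : a + b + a' + b' = 1) : (-1 : ℤ) ^ (a.val + b.val) + (-1) ^ (a'.val + b'.val) = 0 := by
  revert a b a' b'
  decide

theorem lemma3_general (k : ℕ) (c : ℕ → ZMod 2) (d : ℕ → ℕ → ZMod 2) (e : ℕ → ZMod 2)
    (e' : ZMod 2) (hc : c (k + 1) = 1)
    (h : ℕ → ZMod 2)
    (hh : ∀ i, h i =
        (∑ β ∈ Finset.Icc 1 (k + 1), c β * bitb i β * bitb i 0)
      + (∑ μ ∈ Finset.Icc 1 k, ∑ ν ∈ Finset.Ioc μ k, d μ ν * bitb i μ * bitb i ν)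
      + (∑ α ∈ Finset.range (k + 2), e α * bitb i α) + e')
    (τ : ℕ) :
    ((-1 : ℤ)) ^ ((h (τ % 2 ^ (k + 2))).val + (h ((τ + 1) % 2 ^ (k + 2))).val)
      + (-1 : ℤ) ^ ((h ((τ + 2 ^ (k + 1)) % 2 ^ (k + 2))).val
          + (h ((τ + 1 + 2 ^ (k + 1)) % 2 ^ (k + 2))).val) = 0 := by
  have hq : ∀ i, h i = quadForm k c d e e' (bitb i) := hh
  have hperiodic : ∀ i, h (i % 2 ^ (k + 2)) = h i := fun i => by
    rw [hq, hq]
    exact quadForm_congr fun t ht => bitb_mod_two_pow ht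
  have hflip : ∀ i, h (i + 2 ^ (k + 1)) = h i + bitb i 0 + e (k + 1) := fun i => by
    rw [hq, hq, quadForm_flip_top (x := bitb i) (fun t ht => bitb_add_two_pow_of_lt (by omega))
      (bitb_add_two_pow_self i (k + 1)), hc, one_mul]
  rw [hperiodic, hperiodic, hperiodic, hperiodic]
  apply neg_one_pow_val_add_neg_one_pow_val_eq_zero
  rw [hflip, hflip, bitb_succ_zero]
  have two_eq_zero : (2 : ZMod 2) = 0 := rfl
  linear_combination (h τ + h (τ + 1) + bitb τ 0 + e (k + 1)) * two_eq_zero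

/-- **Lemma 3.** Let `h` be the Boolean function of the `k+2` variables `x_0, …, x_{k+1}`
given by `h = Σ_{β=1}^{k+1} c_β x_β x_0 + Σ_{1 ≤ μ < ν ≤ k} d_{μν} x_μ x_ν
+ Σ_{α=0}^{k+1} e_α x_α + e′`, with `c_{k+1} = 1`.  Writing `h_i` for the value of `h`
at the binary representation of `i` (least significant bit first), for every
`0 ≤ τ ≤ 2^{k+1} − 1` one has
`(−1)^{h_τ + h_{τ+1}} + (−1)^{h_{τ+2^{k+1}} + h_{τ+1+2^{k+1}}} = 0`,
subscripts reduced modulo `2^{k+2}`. -/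
theorem lemma3 (k : ℕ) (c : ℕ → ZMod 2) (d : ℕ → ℕ → ZMod 2) (e : ℕ → ZMod 2)
    (e' : ZMod 2) (hc : c (k + 1) = 1)
    (h : ℕ → ZMod 2)
    (hh : ∀ i, h i =
        (∑ β ∈ Finset.Icc 1 (k + 1), c β * bitb i β * bitb i 0)
      + (∑ μ ∈ Finset.Icc 1 k, ∑ ν ∈ Finset.Ioc μ k, d μ ν * bitb i μ * bitb i ν)
      + (∑ α ∈ Finset.range (k + 2), e α * bitb i α) + e')
    (τ : ℕ) (hτ : τ ≤ 2 ^ (k + 1) - 1) :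
    ((-1 : ℤ)) ^ ((h (τ % 2 ^ (k + 2))).val + (h ((τ + 1) % 2 ^ (k + 2))).val)
      + (-1 : ℤ) ^ ((h ((τ + 2 ^ (k + 1)) % 2 ^ (k + 2))).val
          + (h ((τ + 1 + 2 ^ (k + 1)) % 2 ^ (k + 2))).val) = 0 :=
  lemma3_general k c d e e' hc h hh τ
end

section
/- (Correlation decomposition, equation (15).) Let l ≥ 1 and L ≥ 1 be integers, let a_0,…,a_{l−1} and b_0,…,b_{l−1} be complex sequences of length L, and let h_0,…,h_{2l−1} ∈ {0,1}. Define the sequence z_a of length 2lL as the concatenation of the 2l blocks (−1)^{h_m}·a_{m mod l} for m = 0,1,…,2l−1, and define z_b analogously from the blocks b_m with the same sign vector h. Then for every shift 0 ≤ τ ≤ L, the periodic cross-correlation satisfies φ(z_a, z_b)(τ) = 2·Σ_{m=0}^{l−1} γ(a_m, b_m)(τ) + [(−1)^{h_{l−1}+h_l} + (−1)^{h_{2l−1}+h_0}]·conj(γ(b_0, a_{l−1})(L−τ)) + Σ_{m=0}^{l−2} [(−1)^{h_m+h_{m+1}} + (−1)^{h_{m+l}+h_{m+1+l}}]·conj(γ(b_{m+1},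 a_m)(L−τ)). -/
/-- Aperiodic cross-correlation function (ACCF) of two complex sequences of length `L`
at a nonnegative shift `0 ≤ u ≤ L`: `γ(a,b)(u) = Σ_{i=0}^{L−1−u} a_i · conj(b_{i+u})`
(so `γ(a,b)(L) = 0`). -/
noncomputable def accfN (L : ℕ) (a b : ℕ → ℂ) (u : ℕ) : ℂ :=
  ∑ i ∈ Finset.range (L - u), a i * (starRingEnd ℂ) (b (i + u))

open Finset

lemma sum_range_mul_split_aux {β : Type*} [AddCommMonoid β] (M L : ℕ) (f : ℕ → β) :
    ∑ n ∈ range (M * L), f n = ∑ m ∈ range M, ∑ i ∈ range L, f (m * L + i) := by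
  induction M with
  | zero => simp
  | succ M ih => rw [Nat.succ_mul, Finset.sum_range_add, ih, Finset.sum_range_succ]

lemma div_block_aux {L m i : ℕ} (hi : i < L) : (m * L + i) / L = m := by
  have hL : 0 < L := Nat.pos_of_ne_zero (by omega)
  rw [mul_comm, Nat.mul_add_div hL, Nat.div_eq_of_lt hi, Nat.add_zero]

lemma blk_lt_aux {M L m i : ℕ} (hm : m < M) (hi : i < L) : m * L + i < M * L := by
  calc m * L + i < m * L + L := by omega
  _ = (m + 1) * L := by ring
  _ ≤ M * L := Nat.mul_le_mul_right L hm

lemma mod_block_aux {L m i : ℕ} (hi : i < L) : (m * L + i) % L = i := by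
  rw [mul_comm, Nat.mul_add_mod, Nat.mod_eq_of_lt hi]

/-- **Correlation decomposition, equation (15).** Let `z_a` be the length-`2lL`
concatenation of the `2l` blocks `(−1)^{h_m}·a_{m mod l}`, `m = 0,…,2l−1`, and `z_b` the
analogous concatenation of the blocks `b_m` with the same sign vector `h`.  Then for every
shift `0 ≤ τ ≤ L`,
`φ(z_a,z_b)(τ) = 2·Σ_{m=0}^{l−1} γ(a_m,b_m)(τ)
 + [(−1)^{h_{l−1}+h_l} + (−1)^{h_{2l−1}+h_0}]·conj(γ(b_0,a_{l−1})(L−τ))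
 + Σ_{m=0}^{l−2} [(−1)^{h_m+h_{m+1}} + (−1)^{h_{m+l}+h_{m+1+l}}]·conj(γ(b_{m+1},a_m)(L−τ))`. -/
theorem correlation_decomposition_eq15 (l L : ℕ) (hl : 1 ≤ l) (hL : 1 ≤ L)
    (a b : ℕ → ℕ → ℂ) (h : ℕ → ℕ) (hbits : ∀ m, h m = 0 ∨ h m = 1)
    (za zb : ℕ → ℂ)
    (hza : ∀ n < 2 * l * L, za n = (-1 : ℂ) ^ h (n / L) * a ((n / L) % l) (n % L))
    (hzb : ∀ n < 2 * l * L, zb n = (-1 : ℂ) ^ h (n / L) * b ((n / L) % l) (n % L))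
    (τ : ℕ) (hτ : τ ≤ L) :
    pccf (2 * l * L) za zb τ =
      2 * (∑ m ∈ Finset.range l, accfN L (a m) (b m) τ)
      + ((-1 : ℂ) ^ (h (l - 1) + h l) + (-1 : ℂ) ^ (h (2 * l - 1) + h 0))
          * (starRingEnd ℂ) (accfN L (b 0) (a (l - 1)) (L - τ))
      + ∑ m ∈ Finset.range (l - 1),
          ((-1 : ℂ) ^ (h m + h (m + 1)) + (-1 : ℂ) ^ (h (m + l) + h (m + 1 + l)))
            * (starRingEnd ℂ) (accfN L (b (m + 1)) (a m) (L - τ)) := by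
  obtain ⟨k, rfl⟩ : ∃ k, l = k + 1 := ⟨l - 1, by omega⟩
  -- key block computation
  have key : ∀ m < 2 * (k + 1),
      (∑ i ∈ range L, za (m * L + i) *
          (starRingEnd ℂ) (zb ((m * L + i + τ) % (2 * (k + 1) * L)))) =
      accfN L (a (m % (k + 1))) (b (m % (k + 1))) τ
        + (-1 : ℂ) ^ (h m + h ((m + 1) % (2 * (k + 1)))) *
          (starRingEnd ℂ)
            (accfN L (b (((m + 1) % (2 * (k + 1))) % (k + 1))) (a (m % (k + 1))) (L - τ)) := by
    intro m hm
    rw [show range L = range ((L - τ) + τ) by rw [Nat.sub_add_cancel hτ], Finset.sum_range_add]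
    congr 1
    · -- no-wrap part
      rw [accfN]
      refine Finset.sum_congr rfl fun i hi => ?_
      have hi' : i < L - τ := mem_range.mp hi
      have hiL : i < L := by omega
      have hitL : i + τ < L := by omega
      have hn : m * L + i < 2 * (k + 1) * L := blk_lt_aux hm hiL
      have hn2 : m * L + (i + τ) < 2 * (k + 1) * L := blk_lt_aux hm hitL
      rw [add_assoc, Nat.mod_eq_of_lt hn2, hza _ hn, hzb _ hn2,
        div_block_aux hiL, mod_block_aux hiL, div_block_aux hitL, mod_block_aux hitL]
      rcases hbits m with e | e <;> simp [e, map_mul] <;> ring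
    · -- wrap part
      have hsub : L - (L - τ) = τ := Nat.sub_sub_self hτ
      rw [accfN, map_sum, Finset.mul_sum, hsub]
      refine Finset.sum_congr rfl fun j hj => ?_
      have hjτ : j < τ := mem_range.mp hj
      have hjL : j < L := by omega
      have hiL : L - τ + j < L := by omega
      have hn : m * L + (L - τ + j) < 2 * (k + 1) * L := blk_lt_aux hm hiL
      have e2 : m * L + (L - τ + j) + τ = (m + 1) * L + j := by
        rw [Nat.succ_mul]; omega
      rw [hza _ hn, div_block_aux hiL, mod_block_aux hiL, e2]
      have hzbval : zb (((m + 1) * L + j) % (2 * (k + 1) * L)) =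
          (-1 : ℂ) ^ h ((m + 1) % (2 * (k + 1))) *
            b (((m + 1) % (2 * (k + 1))) % (k + 1)) j := by
        rcases Nat.lt_or_ge (m + 1) (2 * (k + 1)) with hlt | hge
        · have hn2 : (m + 1) * L + j < 2 * (k + 1) * L := blk_lt_aux hlt hjL
          rw [Nat.mod_eq_of_lt hn2, hzb _ hn2, div_block_aux hjL, mod_block_aux hjL,
            Nat.mod_eq_of_lt hlt]
        · have heq : m + 1 = 2 * (k + 1) := by omega
          have hj2 : j < 2 * (k + 1) * L := by
            calc j < L := hjL
            _ ≤ 2 * (k + 1) * L := Nat.le_mul_of_pos_left L (by omega)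
          rw [heq, Nat.add_mod_left, Nat.mod_eq_of_lt hj2, hzb _ hj2,
            Nat.div_eq_of_lt hjL, Nat.mod_eq_of_lt hjL, Nat.mod_self, Nat.zero_mod]
      rw [hzbval, show j + (L - τ) = L - τ + j from Nat.add_comm _ _, pow_add]
      simp only [map_mul, map_pow, map_neg, map_one, Complex.conj_conj]
      ring
  rw [pccf, sum_range_mul_split_aux (2 * (k + 1)) L,
    Finset.sum_congr rfl (fun m hm => key m (mem_range.mp hm)), Finset.sum_add_distrib]
  have hA : ∑ m ∈ range (2 * (k + 1)), accfN L (a (m % (k + 1))) (b (m % (k + 1))) τ =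
      2 * ∑ m ∈ range (k + 1), accfN L (a m) (b m) τ := by
    rw [show 2 * (k + 1) = (k + 1) + (k + 1) by ring, Finset.sum_range_add, two_mul]
    congr 1
    · exact Finset.sum_congr rfl fun m hm => by
        rw [Nat.mod_eq_of_lt (mem_range.mp hm)]
    · exact Finset.sum_congr rfl fun m hm => by
        rw [Nat.add_mod_left, Nat.mod_eq_of_lt (mem_range.mp hm)]
  rw [hA]
  have hB : ∑ m ∈ range (2 * (k + 1)),
      (-1 : ℂ) ^ (h m + h ((m + 1) % (2 * (k + 1)))) *
        (starRingEnd ℂ)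
          (accfN L (b (((m + 1) % (2 * (k + 1))) % (k + 1))) (a (m % (k + 1))) (L - τ)) =
      ((-1 : ℂ) ^ (h (k + 1 - 1) + h (k + 1)) + (-1 : ℂ) ^ (h (2 * (k + 1) - 1) + h 0))
          * (starRingEnd ℂ) (accfN L (b 0) (a (k + 1 - 1)) (L - τ))
      + ∑ m ∈ Finset.range (k + 1 - 1),
          ((-1 : ℂ) ^ (h m + h (m + 1)) + (-1 : ℂ) ^ (h (m + (k + 1)) + h (m + 1 + (k + 1))))
            * (starRingEnd ℂ) (accfN L (b (m + 1)) (a m) (L - τ)) := by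
    rw [show 2 * (k + 1) = (k + 1) + (k + 1) by ring, Finset.sum_range_add,
      Finset.sum_range_succ, Finset.sum_range_succ]
    have hk1 : k + 1 - 1 = k := by omega
    have h2k1 : (k + 1) + (k + 1) - 1 = k + 1 + k := by omega
    rw [hk1, h2k1]
    -- simplify the two boundary terms and the two middle sums
    have hb1 : (k + 1) % ((k + 1) + (k + 1)) = k + 1 := Nat.mod_eq_of_lt (by omega)
    have hb2 : (k + 1 + k + 1) % ((k + 1) + (k + 1)) = 0 := by
      rw [show k + 1 + k + 1 = (k+1) + (k+1) by omega, Nat.mod_self]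
    rw [hb1, hb2, Nat.mod_self, Nat.zero_mod, Nat.mod_eq_of_lt (show k < k + 1 by omega),
      show (k + 1 + k) % (k + 1) = k by rw [Nat.add_mod_left, Nat.mod_eq_of_lt (by omega)]]
    have hS1 : ∑ m ∈ range k,
        (-1 : ℂ) ^ (h m + h ((m + 1) % ((k + 1) + (k + 1)))) *
          (starRingEnd ℂ)
            (accfN L (b (((m + 1) % ((k + 1) + (k + 1))) % (k + 1))) (a (m % (k + 1))) (L - τ)) =
        ∑ m ∈ range k, (-1 : ℂ) ^ (h m + h (m + 1)) *
          (starRingEnd ℂ) (accfN L (b (m + 1)) (a m) (L - τ)) := by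
      refine Finset.sum_congr rfl fun m hm => ?_
      have hmk : m < k := mem_range.mp hm
      rw [Nat.mod_eq_of_lt (show m + 1 < (k+1)+(k+1) by omega),
        Nat.mod_eq_of_lt (show m + 1 < k + 1 by omega),
        Nat.mod_eq_of_lt (show m < k + 1 by omega)]
    have hS2 : ∑ m ∈ range k,
        (-1 : ℂ) ^ (h (k + 1 + m) + h ((k + 1 + m + 1) % ((k + 1) + (k + 1)))) *
          (starRingEnd ℂ)
            (accfN L (b (((k + 1 + m + 1) % ((k + 1) + (k + 1))) % (k + 1)))
              (a ((k + 1 + m) % (k + 1))) (L - τ)) =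
        ∑ m ∈ range k, (-1 : ℂ) ^ (h (m + (k + 1)) + h (m + 1 + (k + 1))) *
          (starRingEnd ℂ) (accfN L (b (m + 1)) (a m) (L - τ)) := by
      refine Finset.sum_congr rfl fun m hm => ?_
      have hmk : m < k := mem_range.mp hm
      rw [Nat.mod_eq_of_lt (show k + 1 + m + 1 < (k+1)+(k+1) by omega),
        show (k + 1 + m + 1) % (k + 1) = m + 1 by
          rw [show k + 1 + m + 1 = (k+1) + (m+1) by omega, Nat.add_mod_left,
            Nat.mod_eq_of_lt]; omega,
        show (k + 1 + m) % (k + 1) = m by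
          rw [show k + 1 + m = (k+1) + m by omega, Nat.add_mod_left, Nat.mod_eq_of_lt]; omega,
        show k + 1 + m = m + (k + 1) from Nat.add_comm _ _,
        show m + (k + 1) + 1 = m + 1 + (k + 1) by omega]
    rw [hS1, hS2]
    have hc : ∑ m ∈ range k,
        ((-1 : ℂ) ^ (h m + h (m + 1)) + (-1 : ℂ) ^ (h (m + (k + 1)) + h (m + 1 + (k + 1))))
          * (starRingEnd ℂ) (accfN L (b (m + 1)) (a m) (L - τ)) =
        (∑ m ∈ range k, (-1 : ℂ) ^ (h m + h (m + 1)) *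
            (starRingEnd ℂ) (accfN L (b (m + 1)) (a m) (L - τ)))
        + ∑ m ∈ range k, (-1 : ℂ) ^ (h (m + (k + 1)) + h (m + 1 + (k + 1))) *
            (starRingEnd ℂ) (accfN L (b (m + 1)) (a m) (L - τ)) := by
      rw [← Finset.sum_add_distrib]
      exact Finset.sum_congr rfl fun m _ => by ring
    rw [hc]
    ring
  rw [hB]
  ring
end

section
/- (Vanishing of boundary terms.) Let l ≥ 1 and L ≥ 1 be integers, let a_0,…,a_{l−1} and b_0,…,b_{l−1} be complex sequences of length L, and let h_0,…,h_{2l−1} ∈ {0,1} satisfy (−1)^{h_τ+h_{τ+1}} + (−1)^{h_{τ+l}+h_{τ+1+l}} = 0 for every 0 ≤ τ ≤ l−1, where subscripts are reduced modulo 2l. Define z_a of length 2lL as the concatenation of the 2l blocks (−1)^{h_m}·a_{m mod l} for m = 0,…,2l−1, and z_b analogously from the blocks b_m with the same sign vector h. Then for every shift 0 ≤ τ ≤ L, φ(z_a, z_b)(τ) = 2·Σ_{m=0}^{l−1} γ(a_m, b_m)(τ). -/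
private lemma sum_range_mul_aux (M K : ℕ) (f : ℕ → ℂ) :
    ∑ n ∈ Finset.range (M * K), f n
      = ∑ m ∈ Finset.range M, ∑ i ∈ Finset.range K, f (m * K + i) := by
  induction M with
  | zero => simp
  | succ M ih =>
    rw [Nat.succ_mul, Finset.sum_range_add, ih, Finset.sum_range_succ]

private lemma mod_block (k L : ℕ) (hk : 0 < k) (c j : ℕ) (hj : j < L) :
    (c * L + j) % (k * L) = c % k * L + j := by
  conv_lhs => rw [← Nat.div_add_mod c k]
  have h1 : (k * (c / k) + c % k) * L + j = k * L * (c / k) + (c % k * L + j) := by ring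
  rw [h1, Nat.mul_add_mod]
  apply Nat.mod_eq_of_lt
  calc c % k * L + j < c % k * L + L := by omega
    _ = (c % k + 1) * L := by ring
    _ ≤ k * L := Nat.mul_le_mul_right _ (Nat.mod_lt _ hk)

private lemma div_block (L m i : ℕ) (hL : 0 < L) (hi : i < L) : (m * L + i) / L = m := by
  rw [mul_comm, Nat.mul_add_div hL, Nat.div_eq_of_lt hi, add_zero]

private lemma mod_block' (L m i : ℕ) (hi : i < L) : (m * L + i) % L = i := by
  rw [add_comm, Nat.add_mul_mod_self_right, Nat.mod_eq_of_lt hi]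

/-- **Vanishing of boundary terms.** Let the sign vector `h ∈ {0,1}^{2l}` satisfy
`(−1)^(h_τ+h_(τ+1)) + (−1)^(h_(τ+l)+h_(τ+1+l)) = 0` for all `0 ≤ τ ≤ l−1`
(subscripts mod `2l`).  If `z_a` is the length-`2lL` concatenation of the blocks
`(−1)^(h_m)·a_(m mod l)` and `z_b` is the analogous concatenation of the blocks `b_m`
with the same sign vector, then for every shift `0 ≤ τ ≤ L`,
`φ(z_a,z_b)(τ) = 2·Σ_{m=0}^{l−1} γ(a_m,b_m)(τ)`. -/
theorem boundary_terms_vanish (l L : ℕ) (hl : 1 ≤ l) (hL : 1 ≤ L)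
    (a b : ℕ → ℕ → ℂ) (h : ℕ → ℕ) (hbits : ∀ m, h m = 0 ∨ h m = 1)
    (hsign : ∀ τ < l,
      (-1 : ℂ) ^ (h (τ % (2 * l)) + h ((τ + 1) % (2 * l)))
        + (-1 : ℂ) ^ (h ((τ + l) % (2 * l)) + h ((τ + 1 + l) % (2 * l))) = 0)
    (za zb : ℕ → ℂ)
    (hza : ∀ n < 2 * l * L, za n = (-1 : ℂ) ^ h (n / L) * a ((n / L) % l) (n % L))
    (hzb : ∀ n < 2 * l * L, zb n = (-1 : ℂ) ^ h (n / L) * b ((n / L) % l) (n % L))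
    (τ : ℕ) (hτ : τ ≤ L) :
    pccf (2 * l * L) za zb τ =
      2 * (∑ m ∈ Finset.range l, accfN L (a m) (b m) τ) := by
  have hL0 : 0 < L := hL
  have h2l : 0 < 2 * l := by omega
  -- abbreviation for the sign
  set s : ℕ → ℂ := fun m => (-1 : ℂ) ^ h m with hs
  have hcs : ∀ m, (starRingEnd ℂ) (s m) = s m := by
    intro m; simp [hs]
  have hss : ∀ m, s m * s m = 1 := by
    intro m; simp only [hs, ← pow_add, ← two_mul, pow_mul]; norm_num
  -- value of za, zb on blocks
  have hlt : ∀ m < 2 * l, ∀ i < L, m * L + i < 2 * l * L := by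
    intro m hm i hi
    calc m * L + i < m * L + L := by omega
      _ = (m + 1) * L := by ring
      _ ≤ 2 * l * L := Nat.mul_le_mul_right _ (by omega)
  have hzav : ∀ m < 2 * l, ∀ i < L, za (m * L + i) = s m * a (m % l) i := by
    intro m hm i hi
    rw [hza _ (hlt m hm i hi), div_block L m i hL0 hi, mod_block' L m i hi]
  have hzbv : ∀ m < 2 * l, ∀ i < L, zb (m * L + i) = s m * b (m % l) i := by
    intro m hm i hi
    rw [hzb _ (hlt m hm i hi), div_block L m i hL0 hi, mod_block' L m i hi]
  -- reindex the pccf sum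
  rw [pccf, sum_range_mul_aux]
  -- compute each inner sum
  have key : ∀ m < 2 * l,
      ∑ i ∈ Finset.range L, za (m * L + i) * (starRingEnd ℂ) (zb ((m * L + i + τ) % (2 * l * L)))
        = accfN L (a (m % l)) (b (m % l)) τ
          + s m * s ((m + 1) % (2 * l)) *
              ∑ k ∈ Finset.range τ,
                a (m % l) (L - τ + k) * (starRingEnd ℂ) (b ((m + 1) % (2 * l) % l) k) := by
    intro m hm
    have hsplit : Finset.range L = Finset.range ((L - τ) + τ) := by
      congr 1; omega
    rw [hsplit, Finset.sum_range_add]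
    congr 1
    · -- main part
      rw [accfN]
      apply Finset.sum_congr rfl
      intro i hi
      rw [Finset.mem_range] at hi
      have hiL : i < L := by omega
      have hiτ : i + τ < L := by omega
      have e1 : m * L + i + τ = m * L + (i + τ) := by ring
      rw [e1, mod_block (2 * l) L h2l m (i + τ) hiτ, Nat.mod_eq_of_lt hm,
        hzav m hm i hiL, hzbv m hm (i + τ) hiτ, map_mul, hcs]
      linear_combination (a (m % l) i * (starRingEnd ℂ) (b (m % l) (i + τ))) * hss m
    · -- boundary part
      rw [Finset.mul_sum]
      apply Finset.sum_congr rfl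
      intro k hk
      rw [Finset.mem_range] at hk
      have hkL : k < L := by omega
      have e1 : m * L + (L - τ + k) + τ = (m + 1) * L + k := by
        have hLτ : L - τ + τ = L := by omega
        calc m * L + (L - τ + k) + τ = m * L + (L - τ + τ) + k := by ring
          _ = (m + 1) * L + k := by rw [hLτ]; ring
      have h1 : (L - τ + k) < L := by omega
      rw [e1, mod_block (2 * l) L h2l (m + 1) k hkL,
        hzav m hm (L - τ + k) h1,
        hzbv ((m + 1) % (2 * l)) (Nat.mod_lt _ h2l) k hkL, map_mul, hcs]
      ring
  rw [Finset.sum_congr rfl (fun m hm => key m (Finset.mem_range.mp hm)),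
    Finset.sum_add_distrib]
  have e2 : Finset.range (2 * l) = Finset.range (l + l) := by
    congr 1; ring
  -- main sums
  have main : ∑ m ∈ Finset.range (2 * l), accfN L (a (m % l)) (b (m % l)) τ
      = 2 * ∑ m ∈ Finset.range l, accfN L (a m) (b m) τ := by
    rw [e2, Finset.sum_range_add, two_mul]
    congr 1
    · exact Finset.sum_congr rfl fun m hm => by
        rw [Nat.mod_eq_of_lt (Finset.mem_range.mp hm)]
    · exact Finset.sum_congr rfl fun m hm => by
        have hm' := Finset.mem_range.mp hm
        rw [add_comm l m, Nat.add_mod_right, Nat.mod_eq_of_lt hm']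
  -- boundary sums vanish
  have bdry : ∑ m ∈ Finset.range (2 * l),
      (s m * s ((m + 1) % (2 * l)) *
        ∑ k ∈ Finset.range τ,
          a (m % l) (L - τ + k) * (starRingEnd ℂ) (b ((m + 1) % (2 * l) % l) k)) = 0 := by
    rw [e2, Finset.sum_range_add, ← Finset.sum_add_distrib]
    apply Finset.sum_eq_zero
    intro m hm
    have hm' := Finset.mem_range.mp hm
    have i1 : (m + 1) % (2 * l) % l = (m + 1) % l := by
      rw [Nat.mod_eq_of_lt (by omega : m + 1 < 2 * l)]
    have i2 : (l + m + 1) % (2 * l) % l = (m + 1) % l := by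
      rcases Nat.lt_or_ge (m + 1) l with hc | hc
      · rw [Nat.mod_eq_of_lt (by omega : l + m + 1 < 2 * l)]
        have : l + m + 1 = (m + 1) + l := by ring
        rw [this, Nat.add_mod_right]
      · have hm1 : m + 1 = l := by omega
        have : l + m + 1 = 2 * l := by omega
        rw [this, Nat.mod_self, Nat.zero_mod, hm1, Nat.mod_self]
    have i3 : (l + m) % l = m % l := by
      rw [add_comm l m, Nat.add_mod_right]
    rw [i1, i2, i3]
    rw [← add_mul]
    have hzero : s m * s ((m + 1) % (2 * l)) + s (l + m) * s ((l + m + 1) % (2 * l)) = 0 := by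
      have hs1 := hsign m hm'
      simp only [hs, ← pow_add] at *
      have em : m % (2 * l) = m := Nat.mod_eq_of_lt (by omega)
      have em2 : (m + l) % (2 * l) = l + m := by
        rw [Nat.mod_eq_of_lt (by omega)]; ring
      have em3 : (m + 1 + l) % (2 * l) = (l + m + 1) % (2 * l) := by
        congr 1; ring
      rw [em, em2, em3] at hs1
      exact hs1
    rw [hzero, zero_mul]
  rw [main, bdry, add_zero]
end
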